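/- arXiv:1009.2471 — 4 statements merged into one kernel-verified Lean document; each statement's English description precedes it below -/
import Mathlib

section
/- Fix a, b > 0 with |a-b| < 1 < a+b, and let γ = (a² + b² − 1)/(2ab), θ₀ = arccos(γ). Define the distribution K on ℝ² × ℝ² as the pushforward of normalized arclength dθ on [0, 2π) under θ ↦ ((a cos θ, a sin θ), (b cos(θ + θ₀), b sin(θ + θ₀))). Then the Fourier transform of K satisfies K̂(ξ, η) = σ̂(U(ξ, η)), where σ is arclength measure on the unit circle in ℝ² and U : ℝ⁴ → ℝ² is the linear map U(ξ, η) = (a ξ₁ + b γ η₁ + b √(1−γ²) η₂, a ξ₂ − b √(1−γ²) η₁ + b γ η₂). -/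
/-! The integrands agree pointwise: by the angle-addition formulas the phase is linear in
`(cos θ, sin θ)` with coefficient vector `U`, once `cos θ₀ = γ` and `sin θ₀ = √(1 - γ²)`.
The first of these needs `γ ∈ [-1, 1]`, which is the triangle inequality for the triangle with
sides `a`, `b`, `1`: `γ` is the cosine of its angle between the sides `a` and `b`. -/

open MeasureTheory Real Complex

lemma neg_one_le_lawOfCosines {a b : ℝ} (ha : 0 < a) (hb : 0 < b) (h : 1 ≤ a + b) :
    -1 ≤ (a ^ 2 + b ^ 2 - 1) / (2 * a * b) := by
  rw [le_div_iff₀ (by positivity)]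
  nlinarith

lemma lawOfCosines_le_one {a b : ℝ} (ha : 0 < a) (hb : 0 < b) (h : |a - b| ≤ 1) :
    (a ^ 2 + b ^ 2 - 1) / (2 * a * b) ≤ 1 := by
  rw [div_le_iff₀ (by positivity)]
  nlinarith [sq_abs (a - b), abs_nonneg (a - b)]

lemma phase_eq_cos_mul_add_sin_mul (a b θ θ₀ : ℝ) (ξ η : ℝ × ℝ) :
    a * Real.cos θ * ξ.1 + a * Real.sin θ * ξ.2
        + b * Real.cos (θ + θ₀) * η.1 + b * Real.sin (θ + θ₀) * η.2
      = Real.cos θ * (a * ξ.1 + b * Real.cos θ₀ * η.1 + b * Real.sin θ₀ * η.2)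
        + Real.sin θ * (a * ξ.2 - b * Real.sin θ₀ * η.1 + b * Real.cos θ₀ * η.2) := by
  rw [Real.cos_add, Real.sin_add]
  ring

theorem stmt_5 (a b : ℝ) (ha : 0 < a) (hb : 0 < b) (h1 : |a - b| < 1) (h2 : 1 < a + b)
    (γ θ₀ : ℝ) (hγ : γ = (a ^ 2 + b ^ 2 - 1) / (2 * a * b)) (hθ₀ : θ₀ = Real.arccos γ)
    (ξ η : ℝ × ℝ)
    (U : ℝ × ℝ)
    (hU : U = (a * ξ.1 + b * γ * η.1 + b * Real.sqrt (1 - γ ^ 2) * η.2,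
               a * ξ.2 - b * Real.sqrt (1 - γ ^ 2) * η.1 + b * γ * η.2)) :
    (∫ θ in Set.Ico (0 : ℝ) (2 * π),
        Complex.exp (-2 * π * Complex.I *
          (a * Real.cos θ * ξ.1 + a * Real.sin θ * ξ.2 +
            b * Real.cos (θ + θ₀) * η.1 + b * Real.sin (θ + θ₀) * η.2)))
      = ∫ θ in Set.Ico (0 : ℝ) (2 * π),
          Complex.exp (-2 * π * Complex.I * (Real.cos θ * U.1 + Real.sin θ * U.2)) := by
  have hcos : Real.cos θ₀ = γ := by
    subst hγ hθ₀
    exact Real.cos_arccos (neg_one_le_lawOfCosines ha hb h2.le) (lawOfCosines_le_one ha hb h1.le)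
  have hsin : Real.sin θ₀ = √(1 - γ ^ 2) := by rw [hθ₀, Real.sin_arccos]
  refine setIntegral_congr_fun measurableSet_Ico fun θ _ => ?_
  have hphase := phase_eq_cos_mul_add_sin_mul a b θ θ₀ ξ η
  rw [hcos, hsin] at hphase
  subst hU
  congr 2
  exact_mod_cast hphase
end

section
/- Let F, G : ℝ² → [0, ∞) be measurable and let M(ξ, η) ≥ 0 satisfy M(ξ, η) ≤ A (1 + |ξ| + |η|)^{-1/2}, and let w(ξ, η) ≥ 0 with sup_ξ ∫ w(ξ, η) dη ≤ B and sup_η ∫ w(ξ, η) dξ ≤ B, and suppose moreover that w is supported where |ξ + η| ≤ 1 (so that (1+|ξ|) ≈ (1+|η|) on the support). Then for any β₁, β₂ ≥ 0 with β₁ + β₂ = 1/2, ∬ F(ξ) G(η) M(ξ, η) w(ξ, η) dξ dη ≤ C (∫ F(ξ)² (1+|ξ|)^{-2β₁} dξ)^{1/2} (∫ G(η)² (1+|η|)^{-2β₂} dη)^{1/2}, with C depending only on A, B. -/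
/-!
Split the decay of `M` between the two variables: since `β₁ + β₂ = 1/2`,
`(1 + |ξ| + |η|)^{-1/2} ≤ (1 + |ξ|)^{-β₁} (1 + |η|)^{-β₂}`. Absorbing these factors into
`F` and `G`, the form becomes `∬ f(ξ) g(η) w(ξ, η)`, which Schur's test bounds by
`B ‖f‖₂ ‖g‖₂`: write `w = √w · √w`, apply Cauchy–Schwarz on the product space, and integrate
`w` in `η` against `f(ξ)²` and in `ξ` against `g(η)²`.
-/

open MeasureTheory Real

noncomputable abbrev Plane := EuclideanSpace ℝ (Fin 2)

open Function
open scoped ENNReal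

lemma ENNReal.rpow_one_half_sq (x : ℝ≥0∞) : (x ^ (1 / 2 : ℝ)) ^ 2 = x := by
  rw [← ENNReal.rpow_natCast, ← ENNReal.rpow_mul]
  norm_num

section Schur

variable {α β : Type*} [MeasurableSpace α] [MeasurableSpace β] {μ : Measure α} {ν : Measure β}

lemma lintegral_lintegral_sq_mul_le {f : α → ℝ≥0∞} (hf : Measurable f) {K : α → β → ℝ≥0∞}
    (hK : Measurable (uncurry K)) {b : ℝ≥0∞} (hb : ∀ x, ∫⁻ y, K x y ∂ν ≤ b) :
    ∫⁻ x, ∫⁻ y, f x ^ 2 * K x y ∂ν ∂μ ≤ b * ∫⁻ x, f x ^ 2 ∂μ := by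
  calc ∫⁻ x, ∫⁻ y, f x ^ 2 * K x y ∂ν ∂μ = ∫⁻ x, f x ^ 2 * ∫⁻ y, K x y ∂ν ∂μ := by
        simp_rw [lintegral_const_mul _ hK.of_uncurry_left]
    _ ≤ ∫⁻ x, b * f x ^ 2 ∂μ := lintegral_mono fun x => by rw [mul_comm]; gcongr; exact hb x
    _ = b * ∫⁻ x, f x ^ 2 ∂μ := lintegral_const_mul _ (hf.pow_const 2)

theorem lintegral_lintegral_mul_le_of_schur [SFinite μ] [SFinite ν] {f : α → ℝ≥0∞}
    {g : β → ℝ≥0∞} (hf : Measurable f) (hg : Measurable g) {K : α → β → ℝ≥0∞}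
    (hK : Measurable (uncurry K)) {b : ℝ≥0∞} (hb₁ : ∀ x, ∫⁻ y, K x y ∂ν ≤ b)
    (hb₂ : ∀ y, ∫⁻ x, K x y ∂μ ≤ b) :
    ∫⁻ x, ∫⁻ y, f x * g y * K x y ∂ν ∂μ
      ≤ b * (∫⁻ x, f x ^ 2 ∂μ) ^ (1 / 2 : ℝ) * (∫⁻ y, g y ^ 2 ∂ν) ^ (1 / 2 : ℝ) := by
  set s : α × β → ℝ≥0∞ := fun p => K p.1 p.2 ^ (1 / 2 : ℝ)
  have hs : Measurable s := hK.pow_const _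
  have hf' : Measurable fun p : α × β => f p.1 * s p := (hf.comp measurable_fst).mul hs
  have hg' : Measurable fun p : α × β => g p.2 * s p := (hg.comp measurable_snd).mul hs
  have hsq : ∀ (c : ℝ≥0∞) (p : α × β), (c * s p) ^ (2 : ℝ) = c ^ 2 * K p.1 p.2 := fun c p => by
    rw [ENNReal.rpow_two, mul_pow, ENNReal.rpow_one_half_sq]
  calc ∫⁻ x, ∫⁻ y, f x * g y * K x y ∂ν ∂μ
      = ∫⁻ p, (f p.1 * s p) * (g p.2 * s p) ∂μ.prod ν := by
        rw [lintegral_prod _ (by fun_prop)]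
        refine lintegral_congr fun x => lintegral_congr fun y => ?_
        rw [mul_mul_mul_comm, ← sq, ENNReal.rpow_one_half_sq]
    _ ≤ (∫⁻ p, (f p.1 * s p) ^ (2 : ℝ) ∂μ.prod ν) ^ (1 / 2 : ℝ)
          * (∫⁻ p, (g p.2 * s p) ^ (2 : ℝ) ∂μ.prod ν) ^ (1 / 2 : ℝ) :=
        ENNReal.lintegral_mul_le_Lp_mul_Lq _ Real.HolderConjugate.two_two
          hf'.aemeasurable hg'.aemeasurable
    _ ≤ (b * ∫⁻ x, f x ^ 2 ∂μ) ^ (1 / 2 : ℝ) * (b * ∫⁻ y, g y ^ 2 ∂ν) ^ (1 / 2 : ℝ) := by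
        gcongr
        · simp_rw [hsq]
          rw [lintegral_prod _ (by fun_prop)]
          exact lintegral_lintegral_sq_mul_le hf hK hb₁
        · simp_rw [hsq]
          rw [lintegral_prod_symm _ (by fun_prop)]
          exact lintegral_lintegral_sq_mul_le (K := fun y x => K x y) hg
            (hK.comp measurable_swap) hb₂
    _ = b * (∫⁻ x, f x ^ 2 ∂μ) ^ (1 / 2 : ℝ) * (∫⁻ y, g y ^ 2 ∂ν) ^ (1 / 2 : ℝ) := by
        rw [ENNReal.mul_rpow_of_nonneg _ _ (by norm_num),
          ENNReal.mul_rpow_of_nonneg _ _ (by norm_num), mul_mul_mul_comm, ← sq,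
          ENNReal.rpow_one_half_sq, mul_assoc]

end Schur

lemma one_add_add_rpow_neg_le {a b β₁ β₂ : ℝ} (ha : 0 ≤ a) (hb : 0 ≤ b) (h₁ : 0 ≤ β₁)
    (h₂ : 0 ≤ β₂) : (1 + a + b) ^ (-(β₁ + β₂)) ≤ (1 + a) ^ (-β₁) * (1 + b) ^ (-β₂) := by
  rw [neg_add, rpow_add (by positivity)]
  exact mul_le_mul (rpow_le_rpow_of_nonpos (by positivity) (by linarith) (neg_nonpos.mpr h₁))
    (rpow_le_rpow_of_nonpos (by positivity) (by linarith) (neg_nonpos.mpr h₂))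
    (by positivity) (by positivity)

lemma ENNReal.ofReal_mul_rpow_neg_sq {x t : ℝ} (β : ℝ) (hx : 0 ≤ x) (ht : 0 ≤ t) :
    ENNReal.ofReal (x * t ^ (-β)) ^ 2 = ENNReal.ofReal (x ^ 2 * t ^ (-(2 * β))) := by
  rw [← ENNReal.ofReal_pow (by positivity), mul_pow, ← Real.rpow_two (t ^ _), ← Real.rpow_mul ht]
  ring_nf

lemma ENNReal.ofReal_mul_mul_mul_le_of_le_rpow_neg {x y m v c a b β₁ β₂ : ℝ} (hx : 0 ≤ x)
    (hy : 0 ≤ y) (hv : 0 ≤ v) (hc : 0 ≤ c) (ha : 0 ≤ a) (hb : 0 ≤ b) (h₁ : 0 ≤ β₁)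
    (h₂ : 0 ≤ β₂) (hm : m ≤ c * (1 + a + b) ^ (-(β₁ + β₂))) :
    ENNReal.ofReal (x * y * m * v) ≤ ENNReal.ofReal c *
      (ENNReal.ofReal (x * (1 + a) ^ (-β₁)) * ENNReal.ofReal (y * (1 + b) ^ (-β₂))
        * ENNReal.ofReal v) := by
  rw [← ENNReal.ofReal_mul (by positivity), ← ENNReal.ofReal_mul (by positivity),
    ← ENNReal.ofReal_mul hc]
  refine ENNReal.ofReal_le_ofReal ?_
  calc x * y * m * v ≤ x * y * (c * ((1 + a) ^ (-β₁) * (1 + b) ^ (-β₂))) * v := by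
        gcongr
        exact hm.trans (mul_le_mul_of_nonneg_left (one_add_add_rpow_neg_le ha hb h₁ h₂) hc)
    _ = c * (x * (1 + a) ^ (-β₁) * (y * (1 + b) ^ (-β₂)) * v) := by ring

theorem stmt_7 (A B : ℝ) (hA : 0 < A) (hB : 0 < B) :
    ∃ C : ℝ, 0 < C ∧
      ∀ (F G : Plane → ℝ) (M w : Plane → Plane → ℝ) (β₁ β₂ : ℝ),
        Measurable F → Measurable G →
        Measurable (Function.uncurry M) → Measurable (Function.uncurry w) →
        (∀ x, 0 ≤ F x) → (∀ x, 0 ≤ G x) →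
        (∀ ξ η, 0 ≤ M ξ η) → (∀ ξ η, 0 ≤ w ξ η) →
        (∀ ξ η, M ξ η ≤ A * (1 + ‖ξ‖ + ‖η‖) ^ (-(1 / 2 : ℝ))) →
        (∀ ξ, ∫⁻ η, ENNReal.ofReal (w ξ η) ≤ ENNReal.ofReal B) →
        (∀ η, ∫⁻ ξ, ENNReal.ofReal (w ξ η) ≤ ENNReal.ofReal B) →
        (∀ ξ η, w ξ η ≠ 0 → ‖ξ + η‖ ≤ 1) →
        0 ≤ β₁ → 0 ≤ β₂ → β₁ + β₂ = 1 / 2 →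
        (∫⁻ ξ, ∫⁻ η, ENNReal.ofReal (F ξ * G η * M ξ η * w ξ η))
          ≤ ENNReal.ofReal C *
            (∫⁻ ξ, ENNReal.ofReal (F ξ ^ 2 * (1 + ‖ξ‖) ^ (-(2 * β₁)))) ^ (1 / 2 : ℝ) *
            (∫⁻ η, ENNReal.ofReal (G η ^ 2 * (1 + ‖η‖) ^ (-(2 * β₂)))) ^ (1 / 2 : ℝ) := by
  refine ⟨A * B, mul_pos hA hB, ?_⟩
  intro F G M w β₁ β₂ hF hG _ hw hF0 hG0 _ hw0 hMA hwξ hwη _ hβ₁ hβ₂ hβ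
  set f : Plane → ℝ≥0∞ := fun ξ => ENNReal.ofReal (F ξ * (1 + ‖ξ‖) ^ (-β₁))
  set g : Plane → ℝ≥0∞ := fun η => ENNReal.ofReal (G η * (1 + ‖η‖) ^ (-β₂))
  have hf : Measurable f := by fun_prop
  have hg : Measurable g := by fun_prop
  have hf2 : ∀ ξ, f ξ ^ 2 = ENNReal.ofReal (F ξ ^ 2 * (1 + ‖ξ‖) ^ (-(2 * β₁))) := fun ξ =>
    ENNReal.ofReal_mul_rpow_neg_sq _ (hF0 ξ) (by positivity)
  have hg2 : ∀ η, g η ^ 2 = ENNReal.ofReal (G η ^ 2 * (1 + ‖η‖) ^ (-(2 * β₂))) := fun η =>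
    ENNReal.ofReal_mul_rpow_neg_sq _ (hG0 η) (by positivity)
  calc ∫⁻ ξ, ∫⁻ η, ENNReal.ofReal (F ξ * G η * M ξ η * w ξ η)
      ≤ ∫⁻ ξ, ∫⁻ η, ENNReal.ofReal A * (f ξ * g η * ENNReal.ofReal (w ξ η)) :=
        lintegral_mono fun ξ => lintegral_mono fun η =>
          ENNReal.ofReal_mul_mul_mul_le_of_le_rpow_neg (hF0 ξ) (hG0 η) (hw0 ξ η) hA.le
            (norm_nonneg ξ) (norm_nonneg η) hβ₁ hβ₂ (hβ ▸ hMA ξ η)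
    _ = ENNReal.ofReal A * ∫⁻ ξ, ∫⁻ η, f ξ * g η * ENNReal.ofReal (w ξ η) := by
        simp_rw [lintegral_const_mul' _ _ ENNReal.ofReal_ne_top]
    _ ≤ ENNReal.ofReal A * (ENNReal.ofReal B * (∫⁻ ξ, f ξ ^ 2) ^ (1 / 2 : ℝ)
          * (∫⁻ η, g η ^ 2) ^ (1 / 2 : ℝ)) := by
        gcongr
        exact lintegral_lintegral_mul_le_of_schur (K := fun ξ η => ENNReal.ofReal (w ξ η)) hf hg
          hw.ennreal_ofReal hwξ hwη
    _ = _ := by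
        simp only [hf2, hg2, ENNReal.ofReal_mul hA.le, mul_assoc]
end

section
/- Let μ be a Borel probability measure on a compact set E ⊂ ℝ², and suppose there is C > 0 such that for all triples t = (t₁₂, t₁₃, t₂₃) of positive reals and all ε ∈ (0,1], (μ×μ×μ){(x¹,x²,x³) : t_{ij} − ε ≤ |x^i − x^j| ≤ t_{ij} + ε for all i<j} ≤ C ε³. Then the image of E×E×E under the map (x¹,x²,x³) ↦ (|x¹−x²|, |x¹−x³|, |x²−x³|) ∈ ℝ³ has positive 3-dimensional Lebesgue measure. -/
/-! Push `μ × μ × μ` forward along the side-length map to a probability measure `ρ` on `ℝ × ℝ × ℝ`.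
Side lengths are nonnegative, so any ball of radius `r ≤ 1` can be recentred in the open positive
octant without losing `ρ`-mass, and the hypothesis gives `ρ (closedBall x r) ≤ C r³`, at most `C`
times the volume `(2r)³` of that (sup-metric) ball. Besicovitch's differentiation theorem upgrades
this to `ρ ≤ C • volume` on all sets; as `ρ` gives mass `1` to the image of `E³`, that image has
positive volume. -/

open MeasureTheory Real Metric ENNReal Filter Topology Set

theorem measure_le_of_eventually_closedBall_le {α : Type*} [MetricSpace α] [MeasurableSpace α]
    [BorelSpace α] [SecondCountableTopology α] [HasBesicovitchCovering α]
    {ρ ν : Measure α} [SFinite ρ] [IsLocallyFiniteMeasure ν]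
    (h : ∀ x, ∀ᶠ r in 𝓝[>] 0, ρ (closedBall x r) ≤ ν (closedBall x r)) (s : Set α) :
    ρ s ≤ ν s :=
  (Besicovitch.vitaliFamily ρ).measure_le_of_frequently_le ν Measure.AbsolutelyContinuous.rfl s
    fun x _ => (Besicovitch.tendsto_filterAt ρ x).frequently (h x).frequently

theorem volume_closedBall_real_prod_real_prod_real (x : ℝ × ℝ × ℝ) (r : ℝ) :
    volume (closedBall x r) = ENNReal.ofReal (2 * r) ^ 3 := by
  obtain ⟨a, b, c⟩ := x
  rw [← closedBall_prod_same, ← closedBall_prod_same, Measure.volume_eq_prod, Measure.prod_prod,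
    Measure.volume_eq_prod, Measure.prod_prod, Real.volume_closedBall, Real.volume_closedBall,
    Real.volume_closedBall]
  ring

theorem Real.dist_max_le_of_nonneg {d a r : ℝ} (hd : 0 ≤ d) (h : dist d a ≤ r) :
    dist d (max a r) ≤ r := by
  rw [Real.dist_eq, abs_le] at *
  constructor <;> cases max_cases a r <;> linarith

section SideLengths

variable {X : Type*} [PseudoMetricSpace X]

def sideLengths (x : X × X × X) : ℝ × ℝ × ℝ :=
  (dist x.1 x.2.1, dist x.1 x.2.2, dist x.2.1 x.2.2)

theorem continuous_sideLengths : Continuous (sideLengths : X × X × X → ℝ × ℝ × ℝ) := by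
  unfold sideLengths
  fun_prop

theorem sideLengths_preimage_closedBall (t : ℝ × ℝ × ℝ) (ε : ℝ) :
    sideLengths ⁻¹' closedBall t ε = {x : X × X × X |
      t.1 - ε ≤ dist x.1 x.2.1 ∧ dist x.1 x.2.1 ≤ t.1 + ε ∧
      t.2.1 - ε ≤ dist x.1 x.2.2 ∧ dist x.1 x.2.2 ≤ t.2.1 + ε ∧
      t.2.2 - ε ≤ dist x.2.1 x.2.2 ∧ dist x.2.1 x.2.2 ≤ t.2.2 + ε} := by
  ext x
  simp only [sideLengths, mem_preimage, mem_closedBall, Prod.dist_eq, Real.dist_eq, max_le_iff,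
    abs_sub_le_iff, mem_ofPred_eq]
  constructor
  · rintro ⟨⟨_, _⟩, ⟨_, _⟩, _, _⟩
    refine ⟨?_, ?_, ?_, ?_, ?_, ?_⟩ <;> linarith
  · rintro ⟨_, _, _, _, _, _⟩
    refine ⟨⟨?_, ?_⟩, ⟨?_, ?_⟩, ?_, ?_⟩ <;> linarith

theorem sideLengths_preimage_closedBall_subset (x : ℝ × ℝ × ℝ) (r : ℝ) :
    sideLengths ⁻¹' closedBall x r ⊆
      (sideLengths ⁻¹' closedBall (max x.1 r, max x.2.1 r, max x.2.2 r) r : Set (X × X × X)) := by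
  intro y hy
  simp only [sideLengths, mem_preimage, mem_closedBall, Prod.dist_eq, max_le_iff] at hy ⊢
  exact ⟨dist_max_le_of_nonneg dist_nonneg hy.1, dist_max_le_of_nonneg dist_nonneg hy.2.1,
    dist_max_le_of_nonneg dist_nonneg hy.2.2⟩

theorem map_sideLengths_closedBall_le [MeasurableSpace X] [BorelSpace X]
    [SecondCountableTopology X] {ν : Measure (X × X × X)} {C : ℝ}
    (hbound : ∀ t : ℝ × ℝ × ℝ, 0 < t.1 → 0 < t.2.1 → 0 < t.2.2 → ∀ ε ∈ Ioc (0 : ℝ) 1,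
      ν (sideLengths ⁻¹' closedBall t ε) ≤ ENNReal.ofReal (C * ε ^ 3))
    (x : ℝ × ℝ × ℝ) {r : ℝ} (hr : r ∈ Ioc (0 : ℝ) 1) :
    ν.map sideLengths (closedBall x r) ≤ (C.toNNReal • volume) (closedBall x r) :=
  calc ν.map sideLengths (closedBall x r) = ν (sideLengths ⁻¹' closedBall x r) :=
        Measure.map_apply continuous_sideLengths.measurable measurableSet_closedBall
    _ ≤ ν (sideLengths ⁻¹' closedBall (max x.1 r, max x.2.1 r, max x.2.2 r) r) :=
        measure_mono (sideLengths_preimage_closedBall_subset x r)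
    _ ≤ ENNReal.ofReal (C * r ^ 3) :=
        hbound _ (lt_max_of_lt_right hr.1) (lt_max_of_lt_right hr.1) (lt_max_of_lt_right hr.1) r hr
    _ ≤ ENNReal.ofReal C * ENNReal.ofReal (2 * r) ^ 3 := by
        rw [ENNReal.ofReal_mul' (pow_nonneg hr.1.le 3), ← ENNReal.ofReal_pow (mul_nonneg zero_le_two hr.1.le)]
        gcongr
        exacts [hr.1.le, by linarith [hr.1]]
    _ = (C.toNNReal • volume) (closedBall x r) := by
        rw [Measure.smul_apply, volume_closedBall_real_prod_real_prod_real, ENNReal.smul_def,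
          smul_eq_mul]
        rfl

end SideLengths

theorem stmt_13_general (E : Set (EuclideanSpace ℝ (Fin 2)))
    (μ : Measure (EuclideanSpace ℝ (Fin 2))) [IsProbabilityMeasure μ]
    (hsupp : μ Eᶜ = 0)
    (C : ℝ)
    (hbound : ∀ t₁₂ t₁₃ t₂₃ : ℝ, 0 < t₁₂ → 0 < t₁₃ → 0 < t₂₃ →
      ∀ ε : ℝ, ε ∈ Set.Ioc (0 : ℝ) 1 →
        (μ.prod (μ.prod μ))
          {x : EuclideanSpace ℝ (Fin 2) × EuclideanSpace ℝ (Fin 2) × EuclideanSpace ℝ (Fin 2) |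
            t₁₂ - ε ≤ dist x.1 x.2.1 ∧ dist x.1 x.2.1 ≤ t₁₂ + ε ∧
            t₁₃ - ε ≤ dist x.1 x.2.2 ∧ dist x.1 x.2.2 ≤ t₁₃ + ε ∧
            t₂₃ - ε ≤ dist x.2.1 x.2.2 ∧ dist x.2.1 x.2.2 ≤ t₂₃ + ε}
          ≤ ENNReal.ofReal (C * ε ^ 3)) :
    0 < volume ((fun x : EuclideanSpace ℝ (Fin 2) × EuclideanSpace ℝ (Fin 2) ×
        EuclideanSpace ℝ (Fin 2) =>
          ((dist x.1 x.2.1, dist x.1 x.2.2, dist x.2.1 x.2.2) : ℝ × ℝ × ℝ))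
        '' (E ×ˢ (E ×ˢ E))) := by
  change 0 < volume (sideLengths '' (E ×ˢ (E ×ˢ E)))
  have hball (x : ℝ × ℝ × ℝ) : ∀ᶠ r in 𝓝[>] 0, (μ.prod (μ.prod μ)).map sideLengths (closedBall x r)
      ≤ (C.toNNReal • volume) (closedBall x r) := by
    filter_upwards [Ioc_mem_nhdsGT zero_lt_one] with r hr
    refine map_sideLengths_closedBall_le (fun t h₁ h₂ h₃ ε hε => ?_) x hr
    rw [sideLengths_preimage_closedBall]
    exact hbound t.1 t.2.1 t.2.2 h₁ h₂ h₃ ε hε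
  have hμE : 1 ≤ μ E := by
    simpa [hsupp] using measure_univ_le_add_compl (μ := μ) E
  have hone : 1 ≤ (μ.prod (μ.prod μ)).map sideLengths (sideLengths '' (E ×ˢ (E ×ˢ E))) :=
    calc 1 ≤ μ E * (μ E * μ E) := one_le_mul hμE (one_le_mul hμE hμE)
      _ = μ.prod (μ.prod μ) (E ×ˢ (E ×ˢ E)) := by rw [Measure.prod_prod, Measure.prod_prod]
      _ ≤ μ.prod (μ.prod μ) (sideLengths ⁻¹' (sideLengths '' (E ×ˢ (E ×ˢ E)))) :=
        measure_mono (subset_preimage_image _ _)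
      _ ≤ _ := Measure.le_map_apply continuous_sideLengths.aemeasurable _
  refine pos_iff_ne_zero.2 fun hzero => ?_
  have hmass := hone.trans (measure_le_of_eventually_closedBall_le hball _)
  simp [hzero] at hmass

theorem stmt_13 (E : Set (EuclideanSpace ℝ (Fin 2))) (hE : IsCompact E)
    (μ : Measure (EuclideanSpace ℝ (Fin 2))) [IsProbabilityMeasure μ]
    (hsupp : μ Eᶜ = 0)
    (C : ℝ) (hC : 0 < C)
    (hbound : ∀ t₁₂ t₁₃ t₂₃ : ℝ, 0 < t₁₂ → 0 < t₁₃ → 0 < t₂₃ →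
      ∀ ε : ℝ, ε ∈ Set.Ioc (0 : ℝ) 1 →
        (μ.prod (μ.prod μ))
          {x : EuclideanSpace ℝ (Fin 2) × EuclideanSpace ℝ (Fin 2) × EuclideanSpace ℝ (Fin 2) |
            t₁₂ - ε ≤ dist x.1 x.2.1 ∧ dist x.1 x.2.1 ≤ t₁₂ + ε ∧
            t₁₃ - ε ≤ dist x.1 x.2.2 ∧ dist x.1 x.2.2 ≤ t₁₃ + ε ∧
            t₂₃ - ε ≤ dist x.2.1 x.2.2 ∧ dist x.2.1 x.2.2 ≤ t₂₃ + ε}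
          ≤ ENNReal.ofReal (C * ε ^ 3)) :
    0 < volume ((fun x : EuclideanSpace ℝ (Fin 2) × EuclideanSpace ℝ (Fin 2) ×
        EuclideanSpace ℝ (Fin 2) =>
          ((dist x.1 x.2.1, dist x.1 x.2.2, dist x.2.1 x.2.2) : ℝ × ℝ × ℝ))
        '' (E ×ˢ (E ×ˢ E))) :=
  stmt_13_general E μ hsupp C hbound
end

section
/- Let P ⊂ [0,1]² be a set of n points, s ∈ (0,2), and define μ_P^s as the measure with density n^{−1} n^{2/s} Σ_{p∈P} 𝟙_{B(p, n^{−1/s})}. Then the energy integral I_s(μ_P^s) = ∬ |x−y|^{−s} dμ_P^s(x) dμ_P^s(y) is finite (with a bound independent of n) if and only if n^{−2} Σ_{p ≠ p' ∈ P} |p − p'|^{−s} ≲ 1, provided the points of P are n^{−1/s}-separated. -/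
/-!
Write `r = n^{-1/s}`, `c = n^{2/s-1}` and `B_p = B(p, r)`, so that `μ_P^s = ∑_p c·λ|_{B_p}`, each
piece has mass `c·|B_p| = |B(0,1)|/n`, and `I_s(μ_P^s) = ∑_{p,q} c² I_s(λ|_{B_p}, λ|_{B_q})`.
For `r ≤ |p - q|` the kernel is at least `(3|p - q|)^{-s}` on `B_p × B_q`, which gives the lower
bound. For `|p - q| ≥ 4r` it is at most `(|p - q|/2)^{-s}` there; for closer pairs, including
`p = q`, the local integrability of `|x|^{-s}` (`s < 2`, computed in polar coordinates) bounds the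
pair energy by `≲ r^{-s}|B_p||B_q|`. As `r^{-s} = n`, the `n` diagonal terms contribute `O(1)` in
total and each off-diagonal pair contributes `≲ n^{-2}|p - q|^{-s}`.
-/

open MeasureTheory Metric Set
open scoped ENNReal

section RieszEnergy

variable {α : Type*} [PseudoMetricSpace α] [MeasurableSpace α] {s D : ℝ}

/-- `dist x y ^ (-s)` is `0`, not `∞`, on the diagonal (`Real.rpow` convention). -/
noncomputable def rieszEnergy (s : ℝ) (ν ν' : Measure α) : ℝ≥0∞ :=
  ∫⁻ x, ∫⁻ y, ENNReal.ofReal (dist x y ^ (-s)) ∂ν' ∂ν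

theorem rieszEnergy_smul {ν ν' : Measure α} {a b : ℝ≥0∞} (hb : b ≠ ∞) :
    rieszEnergy s (a • ν) (b • ν') = a * b * rieszEnergy s ν ν' := by
  simp only [rieszEnergy, lintegral_smul_measure, smul_eq_mul]
  rw [lintegral_const_mul' _ _ hb, mul_assoc]

theorem rieszEnergy_le_of_forall_le_dist {ν ν' : Measure α} (hs : 0 ≤ s) (hD : 0 < D)
    (h : ∀ᵐ x ∂ν, ∀ᵐ y ∂ν', D ≤ dist x y) :
    rieszEnergy s ν ν' ≤ ENNReal.ofReal (D ^ (-s)) * ν univ * ν' univ := by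
  calc rieszEnergy s ν ν'
      ≤ ∫⁻ _, ∫⁻ _, ENNReal.ofReal (D ^ (-s)) ∂ν' ∂ν := by
        refine lintegral_mono_ae (h.mono fun x hx => lintegral_mono_ae (hx.mono fun y hy => ?_))
        exact ENNReal.ofReal_le_ofReal (Real.rpow_le_rpow_of_nonpos hD hy (neg_nonpos.2 hs))
    _ = _ := by simp only [lintegral_const]; ring

theorem le_rieszEnergy_of_forall_dist_le {ν ν' : Measure α} (hs : 0 ≤ s)
    (h : ∀ᵐ x ∂ν, ∀ᵐ y ∂ν', 0 < dist x y ∧ dist x y ≤ D) :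
    ENNReal.ofReal (D ^ (-s)) * ν univ * ν' univ ≤ rieszEnergy s ν ν' := by
  calc ENNReal.ofReal (D ^ (-s)) * ν univ * ν' univ
      = ∫⁻ _, ∫⁻ _, ENNReal.ofReal (D ^ (-s)) ∂ν' ∂ν := by simp only [lintegral_const]; ring
    _ ≤ rieszEnergy s ν ν' := by
        refine lintegral_mono_ae (h.mono fun x hx => lintegral_mono_ae (hx.mono fun y hy => ?_))
        exact ENNReal.ofReal_le_ofReal (Real.rpow_le_rpow_of_nonpos hy.1 hy.2 (neg_nonpos.2 hs))

theorem rieszEnergy_finset_sum [SecondCountableTopology α] [OpensMeasurableSpace α]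
    {ι κ : Type*} (I : Finset ι) (J : Finset κ) (ν : ι → Measure α) (ν' : κ → Measure α)
    [∀ j, SFinite (ν' j)] :
    rieszEnergy s (∑ i ∈ I, ν i) (∑ j ∈ J, ν' j)
      = ∑ i ∈ I, ∑ j ∈ J, rieszEnergy s (ν i) (ν' j) := by
  have hmeas : ∀ j, Measurable fun x => ∫⁻ y, ENNReal.ofReal (dist x y ^ (-s)) ∂ν' j := fun j =>
    Measurable.lintegral_prod_right' (f := fun z : α × α => ENNReal.ofReal (dist z.1 z.2 ^ (-s)))
      (by fun_prop)
  simp only [rieszEnergy, lintegral_finsetSum_measure]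
  exact Finset.sum_congr rfl fun i _ => lintegral_finsetSum _ fun j _ => hmeas j

end RieszEnergy

section Balls

variable {α : Type*} [MetricSpace α] [MeasurableSpace α] [OpensMeasurableSpace α]
  (μ : Measure α) {s r : ℝ} {p q : α}

theorem rieszEnergy_restrict_ball_le_of_four_mul_le_dist (hs : 0 ≤ s) (hr : 0 < r)
    (hpq : 4 * r ≤ dist p q) :
    rieszEnergy s (μ.restrict (ball p r)) (μ.restrict (ball q r))
      ≤ ENNReal.ofReal (2 ^ s * dist p q ^ (-s)) * μ (ball p r) * μ (ball q r) := by
  have hpq0 : 0 < dist p q := by linarith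
  have hhalf : (dist p q / 2) ^ (-s) = 2 ^ s * dist p q ^ (-s) := by
    rw [Real.div_rpow hpq0.le zero_le_two, Real.rpow_neg zero_le_two, div_inv_eq_mul, mul_comm]
  rw [← hhalf, ← Measure.restrict_apply_univ, ← Measure.restrict_apply_univ (s := ball q r)]
  refine rieszEnergy_le_of_forall_le_dist hs (by positivity) ?_
  refine ae_restrict_of_forall_mem measurableSet_ball fun x hx =>
    ae_restrict_of_forall_mem measurableSet_ball fun y hy => ?_
  rw [mem_ball] at hx hy
  linarith [dist_triangle4 p x y q, dist_comm p x]

theorem rieszEnergy_restrict_ball_ge [NullSingletonClass μ] (hs : 0 ≤ s) (hpq : r ≤ dist p q) :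
    ENNReal.ofReal ((3 * dist p q) ^ (-s)) * μ (ball p r) * μ (ball q r)
      ≤ rieszEnergy s (μ.restrict (ball p r)) (μ.restrict (ball q r)) := by
  rw [← Measure.restrict_apply_univ, ← Measure.restrict_apply_univ (s := ball q r)]
  refine le_rieszEnergy_of_forall_dist_le hs ?_
  refine ae_restrict_of_forall_mem measurableSet_ball fun x hx => ?_
  have hne : ∀ᵐ y ∂μ.restrict (ball q r), y ≠ x :=
    ae_restrict_of_ae (compl_mem_ae_iff.2 (measure_singleton x))
  filter_upwards [hne, ae_restrict_mem measurableSet_ball] with y hyx hy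
  rw [mem_ball] at hx hy
  exact ⟨dist_pos.2 hyx.symm, by linarith [dist_triangle4 x p q y, dist_comm y q]⟩

end Balls

section Thickening

variable {α : Type*} [PseudoMetricSpace α]

theorem sum_sum_max_dist_rpow_neg [DecidableEq α] (P : Finset α) {r : ℝ} (hr : 0 ≤ r)
    (hsep : ∀ p ∈ P, ∀ q ∈ P, p ≠ q → r ≤ dist p q) (s : ℝ) :
    ∑ p ∈ P, ∑ q ∈ P, max (dist p q) r ^ (-s)
      = P.card * r ^ (-s) + ∑ p ∈ P, ∑ q ∈ P.erase p, dist p q ^ (-s) := by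
  rw [Finset.card_eq_sum_ones, Nat.cast_sum, Finset.sum_mul, ← Finset.sum_add_distrib]
  refine Finset.sum_congr rfl fun p hp => ?_
  rw [← Finset.add_sum_erase P _ hp, dist_self, max_eq_right hr, Nat.cast_one, one_mul]
  congr 1
  refine Finset.sum_congr rfl fun q hq => ?_
  rw [max_eq_left (hsep p hp q (Finset.mem_of_mem_erase hq) (Finset.ne_of_mem_erase hq).symm)]

/-- With `r = n^{-1/s}` and `c = n^{2/s-1}`, `thickenedMeasure volume P r c` is the paper's
`μ_P^s`. -/
noncomputable def thickenedMeasure [MeasurableSpace α] (μ : Measure α) (P : Finset α) (r c : ℝ) :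
    Measure α :=
  ∑ p ∈ P, ENNReal.ofReal c • μ.restrict (ball p r)

theorem withDensity_ofReal_mul_sum_indicator_ball [MeasurableSpace α] [OpensMeasurableSpace α]
    (μ : Measure α) (P : Finset α) (r : ℝ) {c : ℝ} (hc : 0 ≤ c) :
    μ.withDensity (fun z => ENNReal.ofReal (c * ∑ p ∈ P, (ball p r).indicator (fun _ => (1 : ℝ)) z))
      = thickenedMeasure μ P r c := by
  have hdensity : (fun z => ENNReal.ofReal (c * ∑ p ∈ P, (ball p r).indicator (fun _ => (1 : ℝ)) z))
      = ∑ p ∈ P, (ball p r).indicator fun _ => ENNReal.ofReal c := by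
    ext z
    rw [Finset.mul_sum, ENNReal.ofReal_sum_of_nonneg fun p _ =>
      mul_nonneg hc (indicator_nonneg (fun _ _ => zero_le_one) _), Finset.sum_apply]
    refine Finset.sum_congr rfl fun p _ => ?_
    by_cases hz : z ∈ ball p r <;> simp [hz]
  rw [hdensity, thickenedMeasure]
  clear hdensity
  classical
  induction P using Finset.induction_on with
  | empty => simp
  | insert p P hp ih =>
    rw [Finset.sum_insert hp, Finset.sum_insert hp,
      withDensity_add_left (measurable_const.indicator measurableSet_ball), ih,
      withDensity_indicator measurableSet_ball, withDensity_const]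

end Thickening

theorem ENNReal.ofReal_sum_sum_of_nonneg {ι κ : Type*} (I : Finset ι) (J : ι → Finset κ)
    {f : ι → κ → ℝ} (hf : ∀ i ∈ I, ∀ j ∈ J i, 0 ≤ f i j) :
    ENNReal.ofReal (∑ i ∈ I, ∑ j ∈ J i, f i j) = ∑ i ∈ I, ∑ j ∈ J i, ENNReal.ofReal (f i j) := by
  rw [ENNReal.ofReal_sum_of_nonneg fun i hi => Finset.sum_nonneg (hf i hi)]
  exact Finset.sum_congr rfl fun i hi => ENNReal.ofReal_sum_of_nonneg (hf i hi)

section RadialIntegral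

variable {d : ℕ} {s R : ℝ}

theorem eqOn_pow_mul_indicator_Iio_rpow (hd : 1 ≤ d) :
    EqOn (fun y : ℝ => y ^ (d - 1) • (Iio R).indicator (fun y => y ^ (-s)) y)
      ((Iio R).indicator fun y => y ^ ((d : ℝ) - s - 1)) (Ioi 0) := by
  intro y (hy : 0 < y)
  by_cases hyR : y < R
  · simp only [smul_eq_mul, indicator_of_mem (show y ∈ Iio R from hyR)]
    rw [← Real.rpow_natCast, ← Real.rpow_add hy, Nat.cast_sub hd]
    ring_nf
  · simp [indicator_of_notMem (show y ∉ Iio R from hyR)]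

theorem integrableOn_Ioi_pow_mul_indicator_Iio_rpow (hd : 1 ≤ d) (hs : s < d) :
    IntegrableOn (fun y : ℝ => y ^ (d - 1) • (Iio R).indicator (fun y => y ^ (-s)) y) (Ioi 0) := by
  rw [integrableOn_congr_fun (eqOn_pow_mul_indicator_Iio_rpow hd) measurableSet_Ioi,
    integrableOn_indicator_iff measurableSet_Iio]
  exact (intervalIntegral.intervalIntegrable_rpow' (by linarith)).1.mono_set
    fun y ⟨hyR, hy0⟩ => ⟨hy0, le_of_lt hyR⟩

theorem integral_Ioi_pow_mul_indicator_Iio_rpow (hd : 1 ≤ d) (hs : s < d) (hR : 0 < R) :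
    ∫ y in Ioi (0 : ℝ), y ^ (d - 1) • (Iio R).indicator (fun y => y ^ (-s)) y
      = R ^ ((d : ℝ) - s) / (d - s) := by
  rw [setIntegral_congr_fun measurableSet_Ioi (eqOn_pow_mul_indicator_Iio_rpow hd),
    setIntegral_indicator measurableSet_Iio, Ioi_inter_Iio, ← integral_Ioc_eq_integral_Ioo,
    ← intervalIntegral.integral_of_le hR.le, integral_rpow (Or.inl (by linarith)), sub_add_cancel,
    Real.zero_rpow (by linarith), sub_zero]

end RadialIntegral

theorem rpow_neg_one_div_rpow_neg {N s : ℝ} (hN : 0 ≤ N) (hs : s ≠ 0) :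
    (N ^ (-(1 / s))) ^ (-s) = N := by
  rw [← Real.rpow_mul hN, show -(1 / s) * -s = 1 by field_simp, Real.rpow_one]

section Haar

open Module

variable {E : Type*} [NormedAddCommGroup E] [NormedSpace ℝ E] [MeasurableSpace E] [BorelSpace E]
  [FiniteDimensional ℝ E] (μ : Measure E) [μ.IsAddHaarMeasure] {s r c : ℝ}

theorem lintegral_ball_rpow_neg_dist [Nontrivial E] {R : ℝ} (hs : s < finrank ℝ E) (hR : 0 < R)
    (x : E) :
    ∫⁻ y in ball x R, ENNReal.ofReal (dist x y ^ (-s)) ∂μ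
      = ENNReal.ofReal (finrank ℝ E / (finrank ℝ E - s) * R ^ ((finrank ℝ E : ℝ) - s))
        * μ (ball 0 1) := by
  set g : ℝ → ℝ := (Iio R).indicator fun y => y ^ (-s)
  have htranslate : ∫⁻ y in ball x R, ENNReal.ofReal (dist x y ^ (-s)) ∂μ
      = ∫⁻ z, ENNReal.ofReal (g ‖z‖) ∂μ := by
    rw [← lintegral_indicator measurableSet_ball, ← lintegral_add_left_eq_self _ x]
    congr 1 with z
    by_cases hz : ‖z‖ < R
    · simp [g, hz, indicator_of_mem, dist_comm]
    · simp [g, hz, indicator_of_notMem, dist_comm]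
  have hint : Integrable (fun z => g ‖z‖) μ := (integrable_fun_norm_addHaar μ).2
    (integrableOn_Ioi_pow_mul_indicator_Iio_rpow finrank_pos hs)
  have hnonneg : 0 ≤ᵐ[μ] fun z => g ‖z‖ :=
    .of_forall fun z => indicator_nonneg (fun y _ => Real.rpow_nonneg (norm_nonneg z) _) _
  rw [htranslate, ← ofReal_integral_eq_lintegral_ofReal hint hnonneg,
    integral_fun_norm_addHaar μ g, integral_Ioi_pow_mul_indicator_Iio_rpow finrank_pos hs hR,
    ← ofReal_measureReal measure_ball_lt_top.ne, ← ENNReal.ofReal_mul (by positivity)]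
  congr 1
  simp only [nsmul_eq_mul, smul_eq_mul]
  ring

theorem rieszEnergy_restrict_ball_le_of_dist_le_four_mul [Nontrivial E] (hs : s < finrank ℝ E)
    (hr : 0 < r) {p q : E} (hpq : dist p q ≤ 4 * r) :
    rieszEnergy s (μ.restrict (ball p r)) (μ.restrict (ball q r))
      ≤ ENNReal.ofReal (finrank ℝ E / (finrank ℝ E - s) * 6 ^ ((finrank ℝ E : ℝ) - s) * r ^ (-s))
        * μ (ball p r) * μ (ball q r) := by
  set C := finrank ℝ E / (finrank ℝ E - s) * 6 ^ ((finrank ℝ E : ℝ) - s)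
  have hinner : ∀ x ∈ ball p r, ∫⁻ y in ball q r, ENNReal.ofReal (dist x y ^ (-s)) ∂μ
      ≤ ENNReal.ofReal (C * r ^ (-s)) * μ (ball q r) := by
    intro x hx
    have hsub : ball q r ⊆ ball x (6 * r) := by
      refine ball_subset_ball' ?_
      rw [mem_ball] at hx
      linarith [dist_triangle q p x, dist_comm p q, dist_comm p x]
    calc ∫⁻ y in ball q r, ENNReal.ofReal (dist x y ^ (-s)) ∂μ
        ≤ ∫⁻ y in ball x (6 * r), ENNReal.ofReal (dist x y ^ (-s)) ∂μ := lintegral_mono_set hsub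
      _ = ENNReal.ofReal (finrank ℝ E / (finrank ℝ E - s) * (6 * r) ^ ((finrank ℝ E : ℝ) - s))
            * μ (ball 0 1) := lintegral_ball_rpow_neg_dist μ hs (by positivity) x
      _ = ENNReal.ofReal (C * r ^ (-s)) * μ (ball q r) := by
        rw [μ.addHaar_ball_of_pos q hr, ← mul_assoc, ← ENNReal.ofReal_mul (by positivity),
          Real.mul_rpow (by norm_num) hr.le, sub_eq_neg_add, Real.rpow_add hr, Real.rpow_natCast]
        simp only [C]
        ring_nf
  calc rieszEnergy s (μ.restrict (ball p r)) (μ.restrict (ball q r))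
      ≤ ∫⁻ _ in ball p r, ENNReal.ofReal (C * r ^ (-s)) * μ (ball q r) ∂μ :=
        setLIntegral_mono' measurableSet_ball hinner
    _ = _ := by rw [setLIntegral_const]; ring

theorem exists_rieszEnergy_restrict_ball_le [Nontrivial E] (hs0 : 0 ≤ s) (hs : s < finrank ℝ E) :
    ∃ K, 0 ≤ K ∧ ∀ (p q : E) (r : ℝ), 0 < r →
      rieszEnergy s (μ.restrict (ball p r)) (μ.restrict (ball q r))
        ≤ ENNReal.ofReal (K * max (dist p q) r ^ (-s)) * μ (ball p r) * μ (ball q r) := by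
  set C := finrank ℝ E / (finrank ℝ E - s) * 6 ^ ((finrank ℝ E : ℝ) - s)
  have hC : 0 ≤ C := by
    have : 0 < (finrank ℝ E : ℝ) - s := by linarith
    positivity
  refine ⟨4 ^ s * C + 2 ^ s, by positivity, fun p q r hr => ?_⟩
  rcases le_or_gt (dist p q) (4 * r) with hnear | hfar
  · refine (rieszEnergy_restrict_ball_le_of_dist_le_four_mul μ hs hr hnear).trans ?_
    gcongr ENNReal.ofReal ?_ * _ * _
    have hmax : (4 * r) ^ (-s) ≤ max (dist p q) r ^ (-s) :=
      Real.rpow_le_rpow_of_nonpos (lt_max_of_lt_right hr) (max_le hnear (by linarith))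
        (neg_nonpos.2 hs0)
    calc C * r ^ (-s) = 4 ^ s * C * (4 * r) ^ (-s) := by
          rw [Real.mul_rpow (by norm_num) hr.le, Real.rpow_neg (by norm_num : (0 : ℝ) ≤ 4)]
          field_simp
      _ ≤ (4 ^ s * C + 2 ^ s) * max (dist p q) r ^ (-s) := by
          gcongr
          linarith [Real.rpow_nonneg (zero_le_two : (0 : ℝ) ≤ 2) s]
  · rw [max_eq_left (by linarith)]
    refine (rieszEnergy_restrict_ball_le_of_four_mul_le_dist μ hs0 hr hfar.le).trans ?_
    gcongr ENNReal.ofReal (?_ * _) * _ * _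
    linarith [mul_nonneg (Real.rpow_nonneg (by norm_num : (0 : ℝ) ≤ 4) s) hC]

theorem mul_measureReal_ball_rpow_neg_one_div [Nontrivial E] {N : ℝ} (hN : 0 < N) (x : E) :
    N⁻¹ * N ^ ((finrank ℝ E : ℝ) / s) * μ.real (ball x (N ^ (-(1 / s))))
      = μ.real (ball 0 1) / N := by
  have hpow : (N ^ (-(1 / s))) ^ finrank ℝ E = (N ^ ((finrank ℝ E : ℝ) / s))⁻¹ := by
    rw [← Real.rpow_natCast, ← Real.rpow_mul hN.le, ← Real.rpow_neg hN.le]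
    ring_nf
  rw [measureReal_def, μ.addHaar_ball_of_pos _ (by positivity), ENNReal.toReal_mul,
    ENNReal.toReal_ofReal (by positivity), ← measureReal_def, hpow]
  field_simp

theorem ofReal_mul_ofReal_mul_addHaar_balls {a : ℝ} (ha : 0 ≤ a) (hc : 0 ≤ c) (p q : E) :
    ENNReal.ofReal c * ENNReal.ofReal c * (ENNReal.ofReal a * μ (ball p r) * μ (ball q r))
      = ENNReal.ofReal (a * (c * μ.real (ball 0 r)) ^ 2) := by
  have hball (x : E) :
      ENNReal.ofReal c * μ (ball x r) = ENNReal.ofReal (c * μ.real (ball 0 r)) := by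
    rw [ENNReal.ofReal_mul' measureReal_nonneg, ofReal_measureReal measure_ball_lt_top.ne,
      μ.addHaar_ball_center]
  calc _ = ENNReal.ofReal a * (ENNReal.ofReal c * μ (ball p r)) *
        (ENNReal.ofReal c * μ (ball q r)) := by ring
    _ = _ := by
      rw [hball, hball, ← ENNReal.ofReal_mul ha, ← ENNReal.ofReal_mul (by positivity)]
      ring_nf

variable (P : Finset E)

theorem rieszEnergy_thickenedMeasure :
    rieszEnergy s (thickenedMeasure μ P r c) (thickenedMeasure μ P r c)
      = ∑ p ∈ P, ∑ q ∈ P, ENNReal.ofReal c * ENNReal.ofReal c *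
          rieszEnergy s (μ.restrict (ball p r)) (μ.restrict (ball q r)) := by
  simp only [thickenedMeasure, rieszEnergy_finset_sum, rieszEnergy_smul ENNReal.ofReal_ne_top]

variable [DecidableEq E]

theorem rieszEnergy_thickenedMeasure_le {K : ℝ} (hK0 : 0 ≤ K)
    (hK : ∀ p q : E, rieszEnergy s (μ.restrict (ball p r)) (μ.restrict (ball q r))
      ≤ ENNReal.ofReal (K * max (dist p q) r ^ (-s)) * μ (ball p r) * μ (ball q r))
    (hr : 0 ≤ r) (hc : 0 ≤ c) (hsep : ∀ p ∈ P, ∀ q ∈ P, p ≠ q → r ≤ dist p q) :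
    rieszEnergy s (thickenedMeasure μ P r c) (thickenedMeasure μ P r c)
      ≤ ENNReal.ofReal (K * (c * μ.real (ball 0 r)) ^ 2 *
          (P.card * r ^ (-s) + ∑ p ∈ P, ∑ q ∈ P.erase p, dist p q ^ (-s))) := by
  calc rieszEnergy s (thickenedMeasure μ P r c) (thickenedMeasure μ P r c)
      = ∑ p ∈ P, ∑ q ∈ P, ENNReal.ofReal c * ENNReal.ofReal c *
          rieszEnergy s (μ.restrict (ball p r)) (μ.restrict (ball q r)) :=
        rieszEnergy_thickenedMeasure μ P
    _ ≤ ∑ p ∈ P, ∑ q ∈ P,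
          ENNReal.ofReal (K * max (dist p q) r ^ (-s) * (c * μ.real (ball 0 r)) ^ 2) := by
        gcongr with p _ q _
        exact (mul_le_mul_right (hK p q) _).trans_eq
          (ofReal_mul_ofReal_mul_addHaar_balls μ (by positivity) hc p q)
    _ = _ := by
        rw [← sum_sum_max_dist_rpow_neg P hr hsep]
        simp_rw [Finset.mul_sum, mul_right_comm K]
        rw [ENNReal.ofReal_sum_sum_of_nonneg]
        intros
        positivity

theorem rpow_neg_mul_sum_le_rieszEnergy_thickenedMeasure [Nontrivial E] (hs : 0 ≤ s)
    (hc : 0 ≤ c) (hsep : ∀ p ∈ P, ∀ q ∈ P, p ≠ q → r ≤ dist p q) :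
    ENNReal.ofReal (3 ^ (-s) * (c * μ.real (ball 0 r)) ^ 2 *
        ∑ p ∈ P, ∑ q ∈ P.erase p, dist p q ^ (-s))
      ≤ rieszEnergy s (thickenedMeasure μ P r c) (thickenedMeasure μ P r c) := by
  calc ENNReal.ofReal (3 ^ (-s) * (c * μ.real (ball 0 r)) ^ 2 *
          ∑ p ∈ P, ∑ q ∈ P.erase p, dist p q ^ (-s))
      = ∑ p ∈ P, ∑ q ∈ P.erase p,
          ENNReal.ofReal ((3 * dist p q) ^ (-s) * (c * μ.real (ball 0 r)) ^ 2) := by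
        simp_rw [Finset.mul_sum, Real.mul_rpow zero_le_three dist_nonneg]
        rw [ENNReal.ofReal_sum_sum_of_nonneg]
        · ring_nf
        · intros
          positivity
    _ ≤ ∑ p ∈ P, ∑ q ∈ P.erase p, ENNReal.ofReal c * ENNReal.ofReal c *
          rieszEnergy s (μ.restrict (ball p r)) (μ.restrict (ball q r)) := by
        gcongr with p hp q hq
        have hpq : r ≤ dist p q :=
          hsep p hp q (Finset.mem_of_mem_erase hq) (Finset.ne_of_mem_erase hq).symm
        exact (ofReal_mul_ofReal_mul_addHaar_balls μ (by positivity) hc p q).symm.trans_le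
          (mul_le_mul_right (rieszEnergy_restrict_ball_ge μ hs hpq) _)
    _ ≤ ∑ p ∈ P, ∑ q ∈ P, ENNReal.ofReal c * ENNReal.ofReal c *
          rieszEnergy s (μ.restrict (ball p r)) (μ.restrict (ball q r)) := by
        gcongr with p _
        exact Finset.erase_subset p P
    _ = rieszEnergy s (thickenedMeasure μ P r c) (thickenedMeasure μ P r c) :=
        (rieszEnergy_thickenedMeasure μ P).symm

end Haar

open Real Classical

theorem stmt_15 (s : ℝ) (hs : 0 < s) (hs2 : s < 2) :
    ∃ A : ℝ, 0 < A ∧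
      ∀ (n : ℕ), 1 ≤ n → ∀ P : Finset (EuclideanSpace ℝ (Fin 2)),
        P.card = n →
        (↑P ⊆ {x : EuclideanSpace ℝ (Fin 2) | ∀ i, x i ∈ Set.Icc (0 : ℝ) 1}) →
        (∀ p ∈ P, ∀ q ∈ P, p ≠ q → (n : ℝ) ^ (-(1 / s)) ≤ dist p q) →
        (∫⁻ x, ∫⁻ y, ENNReal.ofReal (dist x y ^ (-s))
            ∂(volume.withDensity (fun z => ENNReal.ofReal ((n : ℝ)⁻¹ * (n : ℝ) ^ (2 / s) *
              ∑ p ∈ P, Set.indicator (Metric.ball p ((n : ℝ) ^ (-(1 / s)))) (fun _ => (1 : ℝ)) z)))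
            ∂(volume.withDensity (fun z => ENNReal.ofReal ((n : ℝ)⁻¹ * (n : ℝ) ^ (2 / s) *
              ∑ p ∈ P, Set.indicator (Metric.ball p ((n : ℝ) ^ (-(1 / s)))) (fun _ => (1 : ℝ)) z))))
          ≤ ENNReal.ofReal (A * (1 + (n : ℝ) ^ (-(2 : ℝ)) *
              ∑ p ∈ P, ∑ q ∈ P.erase p, dist p q ^ (-s))) ∧
        ENNReal.ofReal ((n : ℝ) ^ (-(2 : ℝ)) * ∑ p ∈ P, ∑ q ∈ P.erase p, dist p q ^ (-s))
          ≤ ENNReal.ofReal A * (1 +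
              ∫⁻ x, ∫⁻ y, ENNReal.ofReal (dist x y ^ (-s))
                ∂(volume.withDensity (fun z => ENNReal.ofReal ((n : ℝ)⁻¹ * (n : ℝ) ^ (2 / s) *
                  ∑ p ∈ P, Set.indicator (Metric.ball p ((n : ℝ) ^ (-(1 / s)))) (fun _ => (1 : ℝ)) z)))
                ∂(volume.withDensity (fun z => ENNReal.ofReal ((n : ℝ)⁻¹ * (n : ℝ) ^ (2 / s) *
                  ∑ p ∈ P, Set.indicator (Metric.ball p ((n : ℝ) ^ (-(1 / s)))) (fun _ => (1 : ℝ)) z)))) := by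
  have hdim : (Module.finrank ℝ (EuclideanSpace ℝ (Fin 2)) : ℝ) = 2 := by simp
  obtain ⟨K, hK0, hK⟩ := exists_rieszEnergy_restrict_ball_le
    (volume : Measure (EuclideanSpace ℝ (Fin 2))) hs.le (hdim ▸ hs2)
  set V := volume.real (ball (0 : EuclideanSpace ℝ (Fin 2)) 1)
  have hV : 0 < V := ENNReal.toReal_pos (measure_ball_pos _ _ one_pos).ne' measure_ball_lt_top.ne
  refine ⟨K * V ^ 2 + 3 ^ s / V ^ 2, by positivity, fun n hn P hcard _ hsep => ?_⟩
  set N : ℝ := (n : ℝ)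
  set S := ∑ p ∈ P, ∑ q ∈ P.erase p, dist p q ^ (-s)
  have hN : 0 < N := by simp [N]; omega
  have hmass := mul_measureReal_ball_rpow_neg_one_div volume (s := s) hN
    (0 : EuclideanSpace ℝ (Fin 2))
  rw [hdim] at hmass
  have hN2 : N ^ (-(2 : ℝ)) = (N ^ 2)⁻¹ := by rw [Real.rpow_neg hN.le]; norm_cast
  rw [withDensity_ofReal_mul_sum_indicator_ball _ P _ (by positivity)]
  refine ⟨(rieszEnergy_thickenedMeasure_le volume P hK0 (hK · · _ (by positivity)) (by positivity)
    (by positivity) hsep).trans ?_, ?_⟩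
  · rw [hmass, rpow_neg_one_div_rpow_neg hN.le hs.ne', hcard, hN2]
    refine ENNReal.ofReal_le_ofReal ?_
    calc K * (V / N) ^ 2 * (N * N + S) = K * V ^ 2 * (1 + (N ^ 2)⁻¹ * S) := by field_simp
      _ ≤ _ := by gcongr; exact le_add_of_nonneg_right (by positivity)
  · calc ENNReal.ofReal (N ^ (-(2 : ℝ)) * S)
        = ENNReal.ofReal (3 ^ s / V ^ 2) * ENNReal.ofReal (3 ^ (-s) * (V / N) ^ 2 * S) := by
          rw [← ENNReal.ofReal_mul (by positivity), hN2, Real.rpow_neg zero_le_three]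
          field_simp
      _ ≤ ENNReal.ofReal (K * V ^ 2 + 3 ^ s / V ^ 2) *
            rieszEnergy s (thickenedMeasure volume P (N ^ (-(1 / s))) (N⁻¹ * N ^ (2 / s)))
              (thickenedMeasure volume P (N ^ (-(1 / s))) (N⁻¹ * N ^ (2 / s))) := by
          rw [← hmass]
          gcongr
          · linarith [mul_nonneg hK0 (sq_nonneg V)]
          · exact rpow_neg_mul_sum_le_rieszEnergy_thickenedMeasure volume P hs.le (by positivity)
              hsep
      _ ≤ _ := by gcongr; exact le_add_self
end
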